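/- arXiv:1912.03155 — 3 statements merged into one kernel-verified Lean document; each statement's English description precedes it below -/
import Mathlib

section
/- Suppose U: [t₀,∞) → (0,∞) is nondecreasing and regularly varying at infinity with index γ > 0 (i.e., U(tz)/U(t) → z^γ for all z > 0). Then for every p ∈ [1,∞), the function A_p(t) = (∫₁^∞ |log(U(zt)/(z^γ U(t)))|^p z^{-2} dz)^{1/p} is bounded on [t₀,∞) and A_p(t) → 0 as t → ∞. -/
open MeasureTheory Filter Set

/-!
Regular variation at `z = 2` gives a doubling bound `U (2 s) ≤ M U s` for large `s`; iterating
it and using monotonicity yields a one-sided Potter bound `U (z t) ≤ C z^ρ U t` for all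
`t ≥ t₀` and `z ≥ 1`. Together with `U (z t) ≥ U t`, the logarithm in `A_p` is then at most
`a + b log z` uniformly in `t`, so the integrand of `A_p(t)^p` is dominated by a multiple of
`z^(-3/2)`. This bounds `A_p`, and dominated convergence, with the pointwise limit supplied by
regular variation, gives `A_p(t) → 0`.
-/

open Real Topology

section PotterBound

variable {U : ℝ → ℝ} {T M : ℝ}

theorem le_pow_mul_of_two_mul_le (hT : 0 ≤ T) (hM : 0 ≤ M)
    (hdouble : ∀ s, T ≤ s → U (2 * s) ≤ M * U s) (n : ℕ) {t : ℝ} (ht : T ≤ t) :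
    U (2 ^ n * t) ≤ M ^ n * U t := by
  induction n with
  | zero => simp
  | succ n ih =>
    have hle : T ≤ 2 ^ n * t :=
      ht.trans (le_mul_of_one_le_left (hT.trans ht) (one_le_pow₀ one_le_two))
    calc U (2 ^ (n + 1) * t) = U (2 * (2 ^ n * t)) := by ring_nf
      _ ≤ M * U (2 ^ n * t) := hdouble _ hle
      _ ≤ M * (M ^ n * U t) := mul_le_mul_of_nonneg_left ih hM
      _ = M ^ (n + 1) * U t := by ring

theorem rpow_logb_comm {x y : ℝ} (hx : 0 < x) (hy : 0 < y) (b : ℝ) :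
    x ^ logb b y = y ^ logb b x := by
  rw [rpow_def_of_pos hx, rpow_def_of_pos hy, logb, logb]
  ring_nf

theorem MonotoneOn.le_mul_rpow_logb_mul (hmono : MonotoneOn U (Ici T)) (hT : 0 < T)
    (hU : ∀ s, T ≤ s → 0 ≤ U s) (hM : 1 ≤ M) (hdouble : ∀ s, T ≤ s → U (2 * s) ≤ M * U s)
    {t z : ℝ} (ht : T ≤ t) (hz : 1 ≤ z) :
    U (z * t) ≤ M * z ^ logb 2 M * U t := by
  set n := ⌈logb 2 z⌉₊
  have ht0 : 0 < t := hT.trans_le ht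
  have hzn : z ≤ 2 ^ n :=
    calc z = 2 ^ logb 2 z := (rpow_logb two_pos (by norm_num) (by linarith)).symm
      _ ≤ 2 ^ (n : ℝ) := rpow_le_rpow_of_exponent_le one_le_two (Nat.le_ceil _)
      _ = 2 ^ n := rpow_natCast 2 n
  have hMn : M ^ n ≤ M * z ^ logb 2 M :=
    calc M ^ n = M ^ (n : ℝ) := (rpow_natCast M n).symm
      _ ≤ M ^ (logb 2 z + 1) :=
        rpow_le_rpow_of_exponent_le hM (Nat.ceil_lt_add_one (logb_nonneg one_lt_two hz)).le
      _ = M * z ^ logb 2 M := by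
        rw [rpow_add_one (by positivity), rpow_logb_comm (by positivity) (by positivity), mul_comm]
  have hzt : T ≤ z * t := ht.trans (le_mul_of_one_le_left ht0.le hz)
  calc U (z * t) ≤ U (2 ^ n * t) :=
        hmono hzt (hzt.trans (mul_le_mul_of_nonneg_right hzn ht0.le))
          (mul_le_mul_of_nonneg_right hzn ht0.le)
    _ ≤ M ^ n * U t := le_pow_mul_of_two_mul_le hT.le (by linarith) hdouble n ht
    _ ≤ M * z ^ logb 2 M * U t := mul_le_mul_of_nonneg_right hMn (hU t ht)

theorem MonotoneOn.exists_le_mul_rpow_mul (hmono : MonotoneOn U (Ici T)) (hT : 0 < T)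
    (hpos : ∀ t, T ≤ t → 0 < U t) (hM : 1 ≤ M)
    (hdouble : ∀ᶠ s in atTop, U (2 * s) ≤ M * U s) :
    ∃ C ρ : ℝ, 1 ≤ C ∧ 0 ≤ ρ ∧ ∀ t, T ≤ t → ∀ z, 1 ≤ z → U (z * t) ≤ C * z ^ ρ * U t := by
  obtain ⟨T₁, hT₁⟩ := eventually_atTop.1 hdouble
  set T' := max T T₁
  have hTT' : T ≤ T' := le_max_left _ _
  have hUT := hpos T le_rfl
  have hUTT' : U T ≤ U T' := hmono self_mem_Ici hTT' hTT'
  refine ⟨M * (U T' / U T), logb 2 M, ?_, logb_nonneg one_lt_two hM, fun t ht z hz => ?_⟩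
  · exact one_le_mul_of_one_le_of_one_le hM ((one_le_div hUT).2 hUTT')
  -- below `T'`, compare with `T'` and absorb `U T' / U T` into the constant
  set s := max t T' with hs_def
  have hs : T' ≤ s := le_max_right _ _
  have hUs : U s ≤ U T' / U T * U t := by
    rw [div_mul_eq_mul_div, le_div_iff₀ hUT]
    rcases le_total t T' with h | h
    · rw [hs_def, max_eq_right h]
      exact mul_le_mul_of_nonneg_left (hmono self_mem_Ici ht ht) (hpos T' hTT').le
    · rw [hs_def, max_eq_left h, mul_comm]
      exact mul_le_mul_of_nonneg_right hUTT' (hpos t ht).le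
  have hzt : T ≤ z * t := ht.trans (le_mul_of_one_le_left (hT.le.trans ht) hz)
  have hzs : z * t ≤ z * s := mul_le_mul_of_nonneg_left (le_max_left _ _) (by linarith)
  calc U (z * t) ≤ U (z * s) := hmono hzt (hzt.trans hzs) hzs
    _ ≤ M * z ^ logb 2 M * U s :=
        (hmono.mono (Ici_subset_Ici.2 hTT')).le_mul_rpow_logb_mul (hT.trans_le hTT')
          (fun s hs => (hpos s (hTT'.trans hs)).le) hM
          (fun s hs => hT₁ s ((le_max_right _ _).trans hs)) hs hz
    _ ≤ M * z ^ logb 2 M * (U T' / U T * U t) := by gcongr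
    _ = M * (U T' / U T) * z ^ logb 2 M * U t := by ring

end PotterBound

theorem abs_log_div_rpow_mul_le {u v C ρ γ z : ℝ} (hv : 0 < v) (hz : 1 ≤ z) (hvu : v ≤ u)
    (huv : u ≤ C * z ^ ρ * v) :
    |log (u / (z ^ γ * v))| ≤ log C + (ρ + |γ|) * log z := by
  have hz0 : 0 < z := by linarith
  have hu : 0 < u := hv.trans_le hvu
  have hC : 0 < C := pos_of_mul_pos_left (pos_of_mul_pos_left (hu.trans_le huv) hv.le)
    (rpow_pos_of_pos hz0 ρ).le
  have hlogz : 0 ≤ log z := log_nonneg hz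
  have hlower : 0 ≤ log (u / v) := log_nonneg ((one_le_div hv).2 hvu)
  have hupper : log (u / v) ≤ log C + ρ * log z := by
    rw [← log_rpow hz0, ← log_mul hC.ne' (rpow_pos_of_pos hz0 ρ).ne']
    exact log_le_log (div_pos hu hv) ((div_le_iff₀ hv).2 huv)
  have hγ : |γ * log z| ≤ |γ| * log z := by rw [abs_mul, abs_of_nonneg hlogz]
  obtain ⟨hγ_lower, hγ_upper⟩ := abs_le.1 hγ
  rw [div_mul_eq_div_div_swap, log_div (div_pos hu hv).ne' (rpow_pos_of_pos hz0 γ).ne',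
    log_rpow hz0, abs_le]
  constructor <;> linarith

section WeightedIntegral

variable {p a b : ℝ}

theorem rpow_div_sq_le_of_le_add_mul_log (hp : 0 < p) (ha : 0 ≤ a) (hb : 0 ≤ b) {x z : ℝ}
    (hx0 : 0 ≤ x) (hz : 1 ≤ z) (hx : x ≤ a + b * log z) :
    x ^ p / z ^ 2 ≤ (a + 2 * p * b) ^ p * z ^ (-(3 / 2) : ℝ) := by
  have hz0 : 0 < z := by linarith
  -- the exponent `1 / (2 * p)` leaves only `z ^ (1 / 2)` after raising to the power `p`
  set w := z ^ (1 / (2 * p))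
  have hw : 1 ≤ w := one_le_rpow hz (by positivity)
  have hlog : log z ≤ 2 * p * w := by
    have h := log_le_rpow_div hz0.le (ε := 1 / (2 * p)) (by positivity)
    rwa [div_div_eq_mul_div, div_one, mul_comm] at h
  have hxw : x ≤ (a + 2 * p * b) * w := by
    nlinarith [mul_le_mul_of_nonneg_left hlog hb]
  calc x ^ p / z ^ 2 ≤ ((a + 2 * p * b) * w) ^ p / z ^ 2 := by gcongr
    _ = (a + 2 * p * b) ^ p * z ^ (-(3 / 2) : ℝ) := by
      rw [mul_rpow (by positivity) (by positivity), ← rpow_mul hz0.le, mul_div_assoc,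
        ← rpow_natCast, ← rpow_sub hz0]
      congr 2
      field_simp
      norm_num

theorem integrableOn_Ioi_one_const_mul_rpow_neg_three_halves (K : ℝ) :
    IntegrableOn (fun z : ℝ => K * z ^ (-(3 / 2) : ℝ)) (Ioi 1) :=
  (integrableOn_Ioi_rpow_of_lt (by norm_num) one_pos).const_mul K

theorem setIntegral_rpow_abs_div_sq_le (hp : 0 < p) (ha : 0 ≤ a) (hb : 0 ≤ b) {f : ℝ → ℝ}
    (hf : ∀ z, 1 < z → |f z| ≤ a + b * log z) :
    ∫ z in Ioi 1, |f z| ^ p / z ^ 2 ≤ 2 * (a + 2 * p * b) ^ p := by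
  have hdom : ∀ᵐ z ∂volume.restrict (Ioi 1),
      |f z| ^ p / z ^ 2 ≤ (a + 2 * p * b) ^ p * z ^ (-(3 / 2) : ℝ) := by
    filter_upwards [ae_restrict_mem measurableSet_Ioi] with z hz
    exact rpow_div_sq_le_of_le_add_mul_log hp ha hb (abs_nonneg _) (le_of_lt hz) (hf z hz)
  calc ∫ z in Ioi 1, |f z| ^ p / z ^ 2
      ≤ ∫ z in Ioi 1, (a + 2 * p * b) ^ p * z ^ (-(3 / 2) : ℝ) :=
        integral_mono_of_nonneg (Eventually.of_forall fun z => by positivity)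
          (integrableOn_Ioi_one_const_mul_rpow_neg_three_halves _) hdom
    _ = 2 * (a + 2 * p * b) ^ p := by
      rw [integral_const_mul, integral_Ioi_rpow_of_lt (by norm_num) one_pos]
      norm_num
      ring

theorem tendsto_setIntegral_rpow_abs_div_sq {ι : Type*} {l : Filter ι} [l.IsCountablyGenerated]
    (hp : 0 < p) (ha : 0 ≤ a) (hb : 0 ≤ b) {f : ι → ℝ → ℝ}
    (hmeas : ∀ᶠ i in l, AEStronglyMeasurable (f i) (volume.restrict (Ioi 1)))
    (hbound : ∀ᶠ i in l, ∀ z, 1 < z → |f i z| ≤ a + b * log z)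
    (hlim : ∀ z, 1 < z → Tendsto (fun i => f i z) l (𝓝 0)) :
    Tendsto (fun i => ∫ z in Ioi 1, |f i z| ^ p / z ^ 2) l (𝓝 0) := by
  have hmeas' : ∀ᶠ i in l, AEStronglyMeasurable (fun z => |f i z| ^ p / z ^ 2)
      (volume.restrict (Ioi 1)) := hmeas.mono fun i hi =>
    ((hi.aemeasurable.abs.pow_const p).div (measurable_id.pow_const 2).aemeasurable).aestronglyMeasurable
  have hdom : ∀ᶠ i in l, ∀ᵐ z ∂volume.restrict (Ioi 1),
      ‖|f i z| ^ p / z ^ 2‖ ≤ (a + 2 * p * b) ^ p * z ^ (-(3 / 2) : ℝ) := by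
    filter_upwards [hbound] with i hi
    filter_upwards [ae_restrict_mem measurableSet_Ioi] with z hz
    rw [norm_of_nonneg (by positivity)]
    exact rpow_div_sq_le_of_le_add_mul_log hp ha hb (abs_nonneg _) (le_of_lt hz) (hi z hz)
  have hlim' : ∀ᵐ z ∂volume.restrict (Ioi 1),
      Tendsto (fun i => |f i z| ^ p / z ^ 2) l (𝓝 0) := by
    filter_upwards [ae_restrict_mem measurableSet_Ioi] with z hz
    simpa [zero_rpow hp.ne'] using
      (((hlim z hz).abs.rpow_const (Or.inr hp.le)).div_const (z ^ 2))
  simpa using tendsto_integral_filter_of_dominated_convergence _ hmeas' hdom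
    (integrableOn_Ioi_one_const_mul_rpow_neg_three_halves _) hlim'

end WeightedIntegral

section RegularVariation

variable {U : ℝ → ℝ} {γ : ℝ}

theorem MonotoneOn.aestronglyMeasurable_log_div_rpow_mul {t₀ t : ℝ}
    (hmono : MonotoneOn U (Ici t₀)) (ht : t₀ ≤ t) (ht0 : 0 ≤ t) :
    AEStronglyMeasurable (fun z => log (U (z * t) / (z ^ γ * U t))) (volume.restrict (Ioi 1)) := by
  have hUm : AEMeasurable (fun z => U (z * t)) (volume.restrict (Ioi 1)) := by
    refine aemeasurable_restrict_of_monotoneOn measurableSet_Ioi fun x hx y hy hxy => ?_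
    have hmem : ∀ w ∈ Ioi (1 : ℝ), w * t ∈ Ici t₀ := fun w hw =>
      ht.trans (le_mul_of_one_le_left ht0 (le_of_lt hw))
    exact hmono (hmem x hx) (hmem y hy) (mul_le_mul_of_nonneg_right hxy ht0)
  exact (measurable_log.comp_aemeasurable
    (hUm.div ((measurable_id.pow_const γ).mul_const (U t)).aemeasurable)).aestronglyMeasurable

theorem tendsto_log_div_rpow_mul {l : Filter ℝ} {z : ℝ} (hz : 0 < z)
    (hRV : Tendsto (fun t => U (t * z) / U t) l (𝓝 (z ^ γ))) :
    Tendsto (fun t => log (U (z * t) / (z ^ γ * U t))) l (𝓝 0) := by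
  have hzγ : z ^ γ ≠ 0 := (rpow_pos_of_pos hz γ).ne'
  have hRV' := hRV.div_const (z ^ γ)
  rw [div_self hzγ] at hRV'
  have h := (continuousAt_log one_ne_zero).tendsto.comp hRV'
  rw [log_one] at h
  refine h.congr fun t => ?_
  simp only [Function.comp_apply, div_div, mul_comm]

end RegularVariation

theorem Ap_bounded_and_tendsto_zero_general (U : ℝ → ℝ) (t₀ : ℝ) (ht₀ : 1 ≤ t₀)
    (hmono : MonotoneOn U (Set.Ici t₀)) (hpos : ∀ t, t₀ ≤ t → 0 < U t)
    (γ : ℝ)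
    (hRV : ∀ z : ℝ, 0 < z → Tendsto (fun t => U (t * z) / U t) atTop (nhds (z ^ γ)))
    (p : ℝ) (hp : 1 ≤ p) :
    (∃ C : ℝ, ∀ t, t₀ ≤ t →
        (∫ z in Set.Ioi (1:ℝ), |Real.log (U (z * t) / (z ^ γ * U t))| ^ p / z ^ 2) ^ (1/p)
          ≤ C) ∧
      Tendsto
        (fun t => (∫ z in Set.Ioi (1:ℝ),
            |Real.log (U (z * t) / (z ^ γ * U t))| ^ p / z ^ 2) ^ (1/p))
        atTop (nhds 0) := by
  have hp0 : 0 < p := by linarith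
  have hdouble : ∀ᶠ s in atTop, U (2 * s) ≤ (2 ^ γ + 1) * U s := by
    filter_upwards [(hRV 2 two_pos).eventually_lt_const (lt_add_one _), eventually_ge_atTop t₀]
      with s hs hs₀
    rw [mul_comm, ← div_le_iff₀ (hpos s hs₀)]
    exact hs.le
  obtain ⟨C, ρ, hC, hρ, hpotter⟩ := hmono.exists_le_mul_rpow_mul (by linarith) hpos
    (by linarith [rpow_pos_of_pos two_pos γ]) hdouble
  have hbound : ∀ t, t₀ ≤ t → ∀ z, 1 < z →
      |log (U (z * t) / (z ^ γ * U t))| ≤ log C + (ρ + |γ|) * log z := fun t ht z hz =>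
    abs_log_div_rpow_mul_le (hpos t ht) hz.le
      (hmono ht (ht.trans (le_mul_of_one_le_left (by linarith) hz.le))
        (le_mul_of_one_le_left (by linarith) hz.le))
      (hpotter t ht z hz.le)
  have ha : 0 ≤ log C := log_nonneg hC
  have hb : 0 ≤ ρ + |γ| := by positivity
  refine ⟨⟨(2 * (log C + 2 * p * (ρ + |γ|)) ^ p) ^ (1 / p), fun t ht => ?_⟩, ?_⟩
  · exact rpow_le_rpow (setIntegral_nonneg measurableSet_Ioi fun z _ => by positivity)
      (setIntegral_rpow_abs_div_sq_le hp0 ha hb (hbound t ht)) (by positivity)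
  · have hI := tendsto_setIntegral_rpow_abs_div_sq hp0 ha hb
      ((eventually_ge_atTop t₀).mono fun t ht =>
        hmono.aestronglyMeasurable_log_div_rpow_mul ht (by linarith))
      ((eventually_ge_atTop t₀).mono hbound)
      (fun z hz => tendsto_log_div_rpow_mul (by linarith) (hRV z (by linarith)))
    simpa [zero_rpow (inv_ne_zero hp0.ne')] using
      hI.rpow_const (p := 1 / p) (Or.inr (by positivity))

/-- if `U` is nondecreasing, positive on `[t₀,∞)` and regularly varying at
infinity with index `γ > 0`, then `A_p(t) = (∫₁^∞ |log (U(zt)/(z^γ U(t)))|^p z⁻² dz)^{1/p}`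
is bounded on `[t₀,∞)` and tends to `0` at infinity. -/
theorem Ap_bounded_and_tendsto_zero (U : ℝ → ℝ) (t₀ : ℝ) (ht₀ : 1 ≤ t₀)
    (hmono : MonotoneOn U (Set.Ici t₀)) (hpos : ∀ t, t₀ ≤ t → 0 < U t)
    (γ : ℝ) (hγ : 0 < γ)
    (hRV : ∀ z : ℝ, 0 < z → Tendsto (fun t => U (t * z) / U t) atTop (nhds (z ^ γ)))
    (p : ℝ) (hp : 1 ≤ p) :
    (∃ C : ℝ, ∀ t, t₀ ≤ t →
        (∫ z in Set.Ioi (1:ℝ), |Real.log (U (z * t) / (z ^ γ * U t))| ^ p / z ^ 2) ^ (1/p)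
          ≤ C) ∧
      Tendsto
        (fun t => (∫ z in Set.Ioi (1:ℝ),
            |Real.log (U (z * t) / (z ^ γ * U t))| ^ p / z ^ 2) ^ (1/p))
        atTop (nhds 0) :=
  Ap_bounded_and_tendsto_zero_general U t₀ ht₀ hmono hpos γ hRV p hp
end

section
/- Under the second order condition with ρ = 0 and p = ∞, the ratio A_∞(t)/A(t) tends to +∞ as t → ∞, where A_∞(t) = sup_{z>1} |log(U(zt)/(z^γ U(t)))|. -/
open MeasureTheory Filter Set ENNReal

/-! For a fixed `w > 1`, the second order condition says `r_w(t) := U(wt)/(w^γ U(t))` satisfies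
`(r_w(t) - 1)/A(t) → log w`; since `A → 0` this forces `r_w → 1`, and then `log r_w ~ r_w - 1`
gives `log r_w(t)/A(t) → log w`. As `A_∞(t) ≥ |log r_w(t)|`, the ratio `A_∞/A` eventually
exceeds any `log w`, which is arbitrarily large. -/

open Topology

lemma tendsto_log_div_of_tendsto_sub_one_div {α : Type*} {l : Filter α} {f g : α → ℝ} {L : ℝ}
    (hg : Tendsto g l (𝓝 0)) (hg_pos : ∀ᶠ x in l, 0 < g x)
    (h : Tendsto (fun x => (f x - 1) / g x) l (𝓝 L)) :
    Tendsto (fun x => Real.log (f x) / g x) l (𝓝 L) := by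
  have hf : Tendsto f l (𝓝 1) := by
    have := (h.mul hg).add_const 1
    rw [mul_zero, zero_add] at this
    refine this.congr' ?_
    filter_upwards [hg_pos] with x hx
    rw [div_mul_cancel₀ _ hx.ne', sub_add_cancel]
  have hf_pos : ∀ᶠ x in l, 0 < f x := hf.eventually (eventually_gt_nhds one_pos)
  have h_lower : Tendsto (fun x => (f x - 1) / g x / f x) l (𝓝 L) := by
    rw [← div_one L]
    exact h.div hf one_ne_zero
  -- `1 - 1/x ≤ log x ≤ x - 1` squeezes `log f / g` between the two quotients.
  refine tendsto_of_tendsto_of_tendsto_of_le_of_le' h_lower h ?_ ?_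
  · filter_upwards [hf_pos, hg_pos] with x hfx hgx
    rw [div_right_comm]
    refine div_le_div_of_nonneg_right ?_ hgx.le
    calc (f x - 1) / f x = 1 - (f x)⁻¹ := by field_simp
      _ ≤ Real.log (f x) := Real.one_sub_inv_le_log_of_pos hfx
  · filter_upwards [hf_pos, hg_pos] with x hfx hgx
    exact div_le_div_of_nonneg_right (Real.log_le_sub_one_of_pos hfx) hgx.le

lemma tendsto_log_ratio_div_of_second_order {U A : ℝ → ℝ} {γ x L : ℝ} (hx : 0 < x)
    (hA0 : Tendsto A atTop (𝓝 0)) (hApos : ∀ᶠ t in atTop, 0 < A t)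
    (h2nd : Tendsto (fun t => (U (t * x) / U t - x ^ γ) / (x ^ γ * A t)) atTop
      (𝓝 L)) :
    Tendsto (fun t => Real.log (U (x * t) / (x ^ γ * U t)) / A t) atTop (𝓝 L) := by
  refine tendsto_log_div_of_tendsto_sub_one_div hA0 hApos (h2nd.congr fun t => ?_)
  have hxγ : x ^ γ ≠ 0 := (Real.rpow_pos_of_pos hx γ).ne'
  rw [mul_comm t x, mul_comm (x ^ γ) (U t), ← div_div, ← div_div, sub_div (U (x * t) / U t),
    div_self hxγ]

theorem Ainfty_div_A_tendsto_top_general (U A : ℝ → ℝ) (γ : ℝ)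
    (hA0 : Tendsto A atTop (nhds 0))
    (hApos : ∀ᶠ t in atTop, 0 < A t)
    (h2nd : ∀ x : ℝ, 0 < x →
      Tendsto (fun t => (U (t * x) / U t - x ^ γ) / (x ^ γ * A t)) atTop
        (nhds (Real.log x))) :
    Tendsto
      (fun t =>
        (⨆ (z : ℝ) (_ : 1 < z), ENNReal.ofReal |Real.log (U (z * t) / (z ^ γ * U t))|)
          / ENNReal.ofReal (A t))
      atTop (nhds ⊤) := by
  rw [ENNReal.tendsto_nhds_top_iff_nat]
  intro n
  set w := Real.exp (n + 1)
  have hw : 1 < w := Real.one_lt_exp_iff.mpr (by positivity)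
  have hlog_w : (n : ℝ) < Real.log w := by rw [Real.log_exp]; linarith
  have hlim := tendsto_log_ratio_div_of_second_order (zero_lt_one.trans hw) hA0 hApos
    (h2nd w (zero_lt_one.trans hw))
  filter_upwards [hlim.eventually (eventually_gt_nhds hlog_w), hApos] with t ht hAt
  calc (n : ℝ≥0∞) = ENNReal.ofReal n := (ENNReal.ofReal_natCast n).symm
    _ < ENNReal.ofReal (Real.log (U (w * t) / (w ^ γ * U t)) / A t) :=
        (ENNReal.ofReal_lt_ofReal_iff ((Nat.cast_nonneg n).trans_lt ht)).mpr ht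
    _ ≤ ENNReal.ofReal |Real.log (U (w * t) / (w ^ γ * U t))| / ENNReal.ofReal (A t) := by
        rw [ENNReal.ofReal_div_of_pos hAt]
        gcongr
        exact le_abs_self _
    _ ≤ _ := by
        gcongr
        exact le_iSup₂_of_le (f := fun (z : ℝ) (_ : 1 < z) =>
          ENNReal.ofReal |Real.log (U (z * t) / (z ^ γ * U t))|) w hw le_rfl

/-- under the second order condition with `ρ = 0`, the ratio
`A_∞(t)/A(t)` tends to `+∞`, where `A_∞(t) = sup_{z>1} |log (U(zt)/(z^γ U(t)))|`. -/
theorem Ainfty_div_A_tendsto_top (U A : ℝ → ℝ) (γ : ℝ) (hγ : 0 < γ)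
    (hA0 : Tendsto A atTop (nhds 0))
    (hApos : ∀ᶠ t in atTop, 0 < A t)
    (hArv : ∀ x : ℝ, 0 < x → Tendsto (fun t => A (t * x) / A t) atTop (nhds 1))
    (hUpos : ∀ᶠ t in atTop, 0 < U t)
    (h2nd : ∀ x : ℝ, 0 < x →
      Tendsto (fun t => (U (t * x) / U t - x ^ γ) / (x ^ γ * A t)) atTop
        (nhds (Real.log x))) :
    Tendsto
      (fun t =>
        (⨆ (z : ℝ) (_ : 1 < z), ENNReal.ofReal |Real.log (U (z * t) / (z ^ γ * U t))|)
          / ENNReal.ofReal (A t))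
      atTop (nhds ⊤) :=
  Ainfty_div_A_tendsto_top_general U A γ hA0 hApos h2nd
end

section
/- Let V be nondecreasing, bounded on [0,1] (finite left endpoint), satisfying the first order condition (V(tx) − V(t))/a(t) → (x^γ − 1)/γ for all x > 0 with γ < 1, a > 0 regularly varying of index γ. Then for p ∈ [1, 1/max(γ,0)), A''_p(m) := (∫₀^∞ |(V(mz) − V(m))/a(m) − (z^γ − 1)/γ|^p e^{−1/z} z^{−2} dz)^{1/p} → 0 as m → ∞. -/
open MeasureTheory Filter Set Real Topology

/-! Iterating the first order condition at `x = 2` and `x = 1/2` along dyadic scales gives a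
Potter-type bound `|(V(mz) - V(m))/a(m)| ≤ D (z^(-β) + z^θ)` for all large `m` and all `z > 0`,
with `p θ < 1`; below the scale where the iteration has to stop, the lower bound of `V` near `0`
takes over. As `z^c e^(-1/z) z⁻²` is integrable on `(0, ∞)` for `c < 1` (it is a Gamma integrand
after `z ↦ 1/z`), dominated convergence applies. -/

theorem abs_sub_le_of_geometric {u b : ℕ → ℝ} {C r : ℝ} {n : ℕ} (hC : 0 ≤ C) (hr : 1 < r)
    (hb0 : 0 ≤ b 0) (hu : ∀ k < n, |u (k + 1) - u k| ≤ C * b k)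
    (hb : ∀ k < n, b (k + 1) ≤ r * b k) :
    |u n - u 0| ≤ C * r ^ n / (r - 1) * b 0 := by
  have hbk : ∀ k ≤ n, b k ≤ r ^ k * b 0 := by
    intro k hk
    induction k with
    | zero => simp
    | succ k ih =>
      calc b (k + 1) ≤ r * b k := hb k hk
        _ ≤ r * (r ^ k * b 0) := by gcongr; exact ih (by omega)
        _ = r ^ (k + 1) * b 0 := by ring
  calc |u n - u 0| = |∑ k ∈ Finset.range n, (u (k + 1) - u k)| := by
        rw [Finset.sum_range_sub]
    _ ≤ ∑ k ∈ Finset.range n, |u (k + 1) - u k| := Finset.abs_sum_le_sum_abs _ _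
    _ ≤ ∑ k ∈ Finset.range n, C * (r ^ k * b 0) := by
        refine Finset.sum_le_sum fun k hk => (hu k (Finset.mem_range.1 hk)).trans ?_
        gcongr
        exact hbk k (Finset.mem_range.1 hk).le
    _ = C * ((r ^ n - 1) / (r - 1)) * b 0 := by
        rw [← Finset.mul_sum, ← Finset.sum_mul, geom_sum_eq hr.ne']; ring
    _ ≤ C * (r ^ n / (r - 1)) * b 0 := by
        have : 0 < r - 1 := sub_pos.2 hr
        gcongr; linarith
    _ = C * r ^ n / (r - 1) * b 0 := by ring

theorem abs_sub_mul_pow_le {V a : ℝ → ℝ} {T C c r m : ℝ} {n : ℕ} (hC : 0 ≤ C) (hr : 1 < r)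
    (hstep : ∀ t ≥ T, |V (t * c) - V t| ≤ C * a t ∧ a (t * c) ≤ r * a t)
    (hT : ∀ k < n, T ≤ m * c ^ k) (ham : 0 ≤ a m) :
    |V (m * c ^ n) - V m| ≤ C * r ^ n / (r - 1) * a m := by
  have h := abs_sub_le_of_geometric (u := fun k => V (m * c ^ k)) (b := fun k => a (m * c ^ k))
    (n := n) hC hr (by simpa using ham)
    (fun k hk => by simpa [pow_succ, mul_assoc] using (hstep _ (hT k hk)).1)
    (fun k hk => by simpa [pow_succ, mul_assoc] using (hstep _ (hT k hk)).2)
  simpa using h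

theorem abs_sub_le_rpow_of_one_le {V a : ℝ → ℝ} {T C θ m z : ℝ} (hV : Monotone V) (hT : 0 ≤ T)
    (hC : 0 ≤ C) (hθ : 0 < θ)
    (hstep : ∀ t ≥ T, |V (t * 2) - V t| ≤ C * a t ∧ a (t * 2) ≤ 2 ^ θ * a t)
    (hm : T ≤ m) (ham : 0 ≤ a m) (hz : 1 ≤ z) :
    |V (m * z) - V m| ≤ C * 2 ^ θ / (2 ^ θ - 1) * z ^ θ * a m := by
  obtain ⟨n, hnz, hzn⟩ := exists_nat_pow_near hz one_lt_two
  have hm0 : 0 ≤ m := hT.trans hm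
  have hr : (1 : ℝ) < 2 ^ θ := one_lt_rpow one_lt_two hθ
  have hchain := abs_sub_mul_pow_le (n := n + 1) hC hr hstep
    (fun k _ => hm.trans (le_mul_of_one_le_right hm0 (one_le_pow₀ one_le_two))) ham
  have hmono : |V (m * z) - V m| ≤ |V (m * 2 ^ (n + 1)) - V m| := by
    have h1 : V m ≤ V (m * z) := hV (le_mul_of_one_le_right hm0 hz)
    have h2 : V (m * z) ≤ V (m * 2 ^ (n + 1)) := hV (by gcongr)
    rw [abs_of_nonneg (by linarith), abs_of_nonneg (by linarith)]
    linarith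
  have hpow : ((2 : ℝ) ^ θ) ^ (n + 1) ≤ 2 ^ θ * z ^ θ := by
    rw [← rpow_natCast, ← rpow_mul zero_le_two, mul_comm, rpow_mul zero_le_two, rpow_natCast,
      ← mul_rpow zero_le_two (by linarith)]
    gcongr
    rw [pow_succ]; linarith
  calc |V (m * z) - V m| ≤ C * (2 ^ θ) ^ (n + 1) / (2 ^ θ - 1) * a m := hmono.trans hchain
    _ ≤ C * (2 ^ θ * z ^ θ) / (2 ^ θ - 1) * a m := by
        have : (0 : ℝ) < 2 ^ θ - 1 := sub_pos.2 hr
        gcongr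
    _ = C * 2 ^ θ / (2 ^ θ - 1) * z ^ θ * a m := by ring

theorem abs_sub_le_rpow_of_le_one {V a : ℝ → ℝ} {T C β m z : ℝ} (hV : Monotone V) (hT : 0 ≤ T)
    (hC : 0 ≤ C) (hβ : 0 < β)
    (hstep : ∀ t ≥ T, |V (t * 2⁻¹) - V t| ≤ C * a t ∧ a (t * 2⁻¹) ≤ 2 ^ β * a t)
    (hz : 0 < z) (hz1 : z ≤ 1) (hmz : T ≤ m * z) (ham : 0 ≤ a m) :
    |V (m * z) - V m| ≤ C * 2 ^ β / (2 ^ β - 1) * z ^ (-β) * a m := by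
  obtain ⟨n, hnz, hzn⟩ := exists_nat_pow_near (one_le_inv₀ hz |>.2 hz1) one_lt_two
  have hm0 : 0 ≤ m := nonneg_of_mul_nonneg_left (hT.trans hmz) hz
  have hr : (1 : ℝ) < 2 ^ β := one_lt_rpow one_lt_two hβ
  have hzn' : z ≤ 2⁻¹ ^ n := by rw [inv_pow]; exact (le_inv_comm₀ hz (pow_pos two_pos n)).2 hnz
  have hchain := abs_sub_mul_pow_le (n := n + 1) hC hr hstep
    (fun k hk => hmz.trans (mul_le_mul_of_nonneg_left
      (hzn'.trans (pow_le_pow_of_le_one (by norm_num) (by norm_num) (by omega))) hm0)) ham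
  have hmono : |V (m * z) - V m| ≤ |V (m * 2⁻¹ ^ (n + 1)) - V m| := by
    have h1 : V (m * z) ≤ V m := hV (mul_le_of_le_one_right hm0 hz1)
    have h2 : V (m * 2⁻¹ ^ (n + 1)) ≤ V (m * z) := by
      refine hV (mul_le_mul_of_nonneg_left ?_ hm0)
      rw [inv_pow]; exact inv_le_of_inv_le₀ hz hzn.le
    rw [abs_of_nonpos (by linarith), abs_of_nonpos (by linarith)]
    linarith
  have hpow : ((2 : ℝ) ^ β) ^ (n + 1) ≤ 2 ^ β * z ^ (-β) := by
    rw [← rpow_natCast, ← rpow_mul zero_le_two, mul_comm, rpow_mul zero_le_two, rpow_natCast,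
      rpow_neg hz.le, ← inv_rpow hz.le, ← mul_rpow zero_le_two (by positivity)]
    gcongr
    rw [pow_succ]; linarith
  calc |V (m * z) - V m| ≤ C * (2 ^ β) ^ (n + 1) / (2 ^ β - 1) * a m := hmono.trans hchain
    _ ≤ C * (2 ^ β * z ^ (-β)) / (2 ^ β - 1) * a m := by
        have : (0 : ℝ) < 2 ^ β - 1 := sub_pos.2 hr
        gcongr
    _ = C * 2 ^ β / (2 ^ β - 1) * z ^ (-β) * a m := by ring

theorem exists_abs_div_le_rpow_add_rpow {V a : ℝ → ℝ} {L T C θ β : ℝ} (hV : Monotone V)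
    (hL : ∀ t > 0, L ≤ V t) (hT : 0 < T) (hC : 0 ≤ C) (hθ : 0 < θ) (hβ : 0 < β)
    (ha : ∀ t ≥ T, 0 < a t)
    (hup : ∀ t ≥ T, |V (t * 2) - V t| ≤ C * a t ∧ a (t * 2) ≤ 2 ^ θ * a t)
    (hdown : ∀ t ≥ T, |V (t * 2⁻¹) - V t| ≤ C * a t ∧ a (t * 2⁻¹) ≤ 2 ^ β * a t)
    (hgrowth : V T < V (T * 2)) :
    ∃ D, 0 ≤ D ∧ ∀ m ≥ T * 2, ∀ z > 0, |(V (m * z) - V m) / a m| ≤ D * (z ^ (-β) + z ^ θ) := by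
  set Cu := C * 2 ^ θ / (2 ^ θ - 1)
  set Cd := C * 2 ^ β / (2 ^ β - 1)
  have hCu : 0 ≤ Cu := div_nonneg (by positivity) (sub_nonneg.2 (one_le_rpow one_le_two hθ.le))
  have hCd : 0 ≤ Cd := div_nonneg (by positivity) (sub_nonneg.2 (one_le_rpow one_le_two hβ.le))
  set K := (V T - L) / (V (T * 2) - V T)
  have hK : 0 ≤ K := div_nonneg (sub_nonneg.2 (hL T hT)) (sub_pos.2 hgrowth).le
  refine ⟨Cu + (1 + K) * Cd, by positivity, fun m hm z hz => ?_⟩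
  have hmT : T ≤ m := by linarith
  have ham := ha m hmT
  have hzθ : 0 ≤ z ^ θ := by positivity
  have hzβ : 0 ≤ z ^ (-β) := by positivity
  have key : |V (m * z) - V m| ≤ (Cu * z ^ θ + (1 + K) * Cd * z ^ (-β)) * a m := by
    rcases le_or_gt 1 z with hz1 | hz1
    · have := abs_sub_le_rpow_of_one_le hV hT.le hC hθ hup hmT ham.le hz1
      have : 0 ≤ (1 + K) * Cd * z ^ (-β) * a m := by positivity
      linarith
    rcases le_or_gt T (m * z) with hmz | hmz
    · have := abs_sub_le_rpow_of_le_one hV hT.le hC hβ hdown hz hz1.le hmz ham.le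
      have : 0 ≤ Cu * z ^ θ * a m + K * Cd * z ^ (-β) * a m := by positivity
      linarith
    -- below the threshold `T`, only the lower bound `L` of `V` is available; it is absorbed by
    -- the increment `V m - V T ≥ V (T * 2) - V T > 0`
    have hm0 : 0 < m := by linarith
    have hTm : V m - V T ≤ Cd * z ^ (-β) * a m := by
      have h := abs_sub_le_rpow_of_le_one hV hT.le hC hβ hdown (z := T / m) (by positivity)
        ((div_le_one hm0).2 hmT) (by rw [mul_div_cancel₀ _ hm0.ne']) ham.le
      rw [mul_div_cancel₀ _ hm0.ne', abs_sub_comm, abs_of_nonneg (sub_nonneg.2 (hV hmT))] at h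
      refine h.trans (mul_le_mul_of_nonneg_right (mul_le_mul_of_nonneg_left ?_ hCd) ham.le)
      exact rpow_le_rpow_of_nonpos hz ((lt_div_iff₀ hm0).2 (by linarith)).le (by linarith)
    have hLT : V T - L ≤ K * (V m - V T) := by
      rw [div_mul_eq_mul_div, le_div_iff₀ (sub_pos.2 hgrowth)]
      exact mul_le_mul_of_nonneg_left (by linarith [hV hm]) (sub_nonneg.2 (hL T hT))
    rw [abs_sub_comm, abs_of_nonneg (sub_nonneg.2 (hV (mul_le_of_le_one_right hm0.le hz1.le)))]
    have := mul_le_mul_of_nonneg_left hTm hK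
    have : 0 ≤ Cu * z ^ θ * a m := by positivity
    linarith [hL (m * z) (by positivity)]
  rw [abs_div, abs_of_pos ham, div_le_iff₀ ham]
  refine key.trans (mul_le_mul_of_nonneg_right ?_ ham.le)
  have : 0 ≤ Cu * z ^ (-β) + (1 + K) * Cd * z ^ θ := by positivity
  linarith

theorem eventually_abs_le_mul_of_tendsto_div {α : Type*} {l : Filter α} {f a : α → ℝ} {ℓ C : ℝ}
    (hlim : Tendsto (fun t => f t / a t) l (𝓝 ℓ)) (hC : |ℓ| < C) (ha : ∀ᶠ t in l, 0 < a t) :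
    ∀ᶠ t in l, |f t| ≤ C * a t := by
  filter_upwards [hlim.abs.eventually (gt_mem_nhds hC), ha] with t ht hat
  rw [abs_div, abs_of_pos hat, div_lt_iff₀ hat] at ht
  exact ht.le

theorem exists_eventually_abs_div_le_rpow_add_rpow {V a : ℝ → ℝ} {L ℓ ℓ' r r' θ β : ℝ}
    (hV : Monotone V) (hL : ∀ t > 0, L ≤ V t) (hθ : 0 < θ) (hβ : 0 < β)
    (ha : ∀ᶠ t in atTop, 0 < a t)
    (hV2 : Tendsto (fun t => (V (t * 2) - V t) / a t) atTop (𝓝 ℓ)) (hℓ : 0 < ℓ)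
    (hVh : Tendsto (fun t => (V (t * 2⁻¹) - V t) / a t) atTop (𝓝 ℓ'))
    (ha2 : Tendsto (fun t => a (t * 2) / a t) atTop (𝓝 r)) (hr : |r| < 2 ^ θ)
    (hah : Tendsto (fun t => a (t * 2⁻¹) / a t) atTop (𝓝 r')) (hr' : |r'| < 2 ^ β) :
    ∃ D, 0 ≤ D ∧ ∀ᶠ m in atTop, ∀ z > 0, |(V (m * z) - V m) / a m| ≤ D * (z ^ (-β) + z ^ θ) := by
  obtain ⟨C, hCℓ, hCℓ'⟩ : ∃ C, |ℓ| < C ∧ |ℓ'| < C :=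
    ⟨|ℓ| + |ℓ'| + 1, by linarith [abs_nonneg ℓ'], by linarith [abs_nonneg ℓ]⟩
  have hgrowth : ∀ᶠ t in atTop, V t < V (t * 2) := by
    filter_upwards [hV2.eventually (eventually_gt_nhds hℓ), ha] with t h hat
    exact sub_pos.1 ((div_pos_iff_of_pos_right hat).1 h)
  obtain ⟨T, hT⟩ := eventually_atTop.1 ((eventually_gt_atTop 0).and <| ha.and <|
    (eventually_abs_le_mul_of_tendsto_div hV2 hCℓ ha).and <|
    (eventually_abs_le_mul_of_tendsto_div hVh hCℓ' ha).and <|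
    (eventually_abs_le_mul_of_tendsto_div ha2 hr ha).and <|
    (eventually_abs_le_mul_of_tendsto_div hah hr' ha).and hgrowth)
  obtain ⟨D, hD, hbound⟩ := exists_abs_div_le_rpow_add_rpow hV hL (hT T le_rfl).1
    ((abs_nonneg ℓ).trans hCℓ.le) hθ hβ (fun t ht => (hT t ht).2.1)
    (fun t ht => ⟨(hT t ht).2.2.1, (le_abs_self _).trans (hT t ht).2.2.2.2.1⟩)
    (fun t ht => ⟨(hT t ht).2.2.2.1, (le_abs_self _).trans (hT t ht).2.2.2.2.2.1⟩)
    (hT T le_rfl).2.2.2.2.2.2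
  exact ⟨D, hD, eventually_atTop.2 ⟨T * 2, hbound⟩⟩

theorem integrableOn_rpow_mul_exp_neg_inv_div_sq {c : ℝ} (hc : c < 1) :
    IntegrableOn (fun z : ℝ => z ^ c * exp (-1 / z) / z ^ 2) (Ioi 0) := by
  have h := (integrableOn_Ioi_comp_rpow_iff' (fun u : ℝ => exp (-u) * u ^ ((1 - c) - 1))
    (p := -1) (by norm_num)).2 (GammaIntegral_convergent (by linarith))
  refine h.congr_fun (fun z (hz : 0 < z) => ?_) measurableSet_Ioi
  beta_reduce
  rw [smul_eq_mul, rpow_neg_one, sub_sub_cancel_left, inv_rpow hz.le, ← rpow_neg hz.le, neg_neg,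
    show (-1 : ℝ) - 1 = -(2 : ℕ) by norm_num, rpow_neg hz.le, rpow_natCast]
  field_simp

theorem rpow_add_le_mul_rpow_add_rpow_of_nonneg {x y p : ℝ} (hx : 0 ≤ x) (hy : 0 ≤ y) (hp : 1 ≤ p) :
    (x + y) ^ p ≤ 2 ^ (p - 1) * (x ^ p + y ^ p) := by
  lift x to NNReal using hx
  lift y to NNReal using hy
  exact_mod_cast NNReal.rpow_add_le_mul_rpow_add_rpow x y hp

theorem abs_sub_rpow_le {x y z p β θ D : ℝ} (hz : 0 < z) (hp : 1 ≤ p) (hD : 0 ≤ D)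
    (hx : |x| ≤ D * (z ^ (-β) + z ^ θ)) (hy : |y| ≤ D * (z ^ (-β) + z ^ θ)) :
    |x - y| ^ p ≤ (2 * D) ^ p * 2 ^ (p - 1) * (z ^ (-β * p) + z ^ (θ * p)) := by
  have hp0 : 0 ≤ p := by linarith
  calc |x - y| ^ p ≤ (2 * D * (z ^ (-β) + z ^ θ)) ^ p := by
        gcongr; linarith [abs_sub x y]
    _ = (2 * D) ^ p * (z ^ (-β) + z ^ θ) ^ p := mul_rpow (by positivity) (by positivity)
    _ ≤ (2 * D) ^ p * (2 ^ (p - 1) * ((z ^ (-β)) ^ p + (z ^ θ) ^ p)) := by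
        gcongr; exact rpow_add_le_mul_rpow_add_rpow_of_nonneg (by positivity) (by positivity) hp
    _ = (2 * D) ^ p * 2 ^ (p - 1) * (z ^ (-β * p) + z ^ (θ * p)) := by
        rw [← rpow_mul hz.le, ← rpow_mul hz.le]; ring

theorem tendsto_integral_abs_sub_rpow_of_le {F : ℝ → ℝ → ℝ} {ψ : ℝ → ℝ} {p β θ D : ℝ}
    (hp : 1 ≤ p) (hβ : 0 ≤ β) (hθ : p * θ < 1) (hD : 0 ≤ D) (hF : ∀ m, Measurable (F m))
    (hlim : ∀ z > 0, Tendsto (fun m => F m z) atTop (𝓝 (ψ z)))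
    (hbound : ∀ᶠ m in atTop, ∀ z > 0, |F m z| ≤ D * (z ^ (-β) + z ^ θ)) :
    Tendsto (fun m => (∫ z in Ioi 0, |F m z - ψ z| ^ p * exp (-1 / z) / z ^ 2) ^ (1 / p))
      atTop (𝓝 0) := by
  have hp0 : 0 < p := by linarith
  have hψ : ∀ z > 0, |ψ z| ≤ D * (z ^ (-β) + z ^ θ) := fun z hz =>
    le_of_tendsto (hlim z hz).abs (hbound.mono fun m hm => hm z hz)
  have hlim_ae : ∀ᵐ z ∂volume.restrict (Ioi 0), Tendsto (fun m => F m z) atTop (𝓝 (ψ z)) :=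
    (ae_restrict_iff' measurableSet_Ioi).2 (.of_forall hlim)
  have hψm : AEMeasurable ψ (volume.restrict (Ioi 0)) :=
    (aestronglyMeasurable_of_tendsto_ae atTop (fun m => (hF m).aestronglyMeasurable)
      hlim_ae).aemeasurable
  set g : ℝ → ℝ := fun z =>
    (2 * D) ^ p * 2 ^ (p - 1) *
      (z ^ (-β * p) * exp (-1 / z) / z ^ 2 + z ^ (θ * p) * exp (-1 / z) / z ^ 2)
  have hg : IntegrableOn g (Ioi 0) :=
    ((integrableOn_rpow_mul_exp_neg_inv_div_sq (by nlinarith)).add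
      (integrableOn_rpow_mul_exp_neg_inv_div_sq (by linarith))).const_mul _
  have hdom : ∀ᶠ m in atTop, ∀ᵐ z ∂volume.restrict (Ioi 0),
      ‖|F m z - ψ z| ^ p * exp (-1 / z) / z ^ 2‖ ≤ g z := by
    filter_upwards [hbound] with m hm
    refine (ae_restrict_iff' measurableSet_Ioi).2 (.of_forall fun z (hz : 0 < z) => ?_)
    rw [Real.norm_of_nonneg (by positivity)]
    calc |F m z - ψ z| ^ p * exp (-1 / z) / z ^ 2
        ≤ (2 * D) ^ p * 2 ^ (p - 1) * (z ^ (-β * p) + z ^ (θ * p)) * exp (-1 / z) / z ^ 2 := by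
          gcongr; exact abs_sub_rpow_le hz hp hD (hm z hz) (hψ z hz)
      _ = g z := by simp only [g]; ring
  have hlim_integrand : ∀ᵐ z ∂volume.restrict (Ioi 0),
      Tendsto (fun m => |F m z - ψ z| ^ p * exp (-1 / z) / z ^ 2) atTop (𝓝 0) := by
    filter_upwards [hlim_ae] with z hz
    have h := ((((hz.sub_const (ψ z)).abs.rpow_const (Or.inr hp0.le)).mul_const
      (exp (-1 / z))).div_const (z ^ 2))
    simpa [zero_rpow hp0.ne'] using h
  have hint := tendsto_integral_filter_of_dominated_convergence g
    (.of_forall fun m => by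
      have := (hF m).aemeasurable (μ := volume.restrict (Ioi 0))
      exact AEMeasurable.aestronglyMeasurable (by fun_prop)) hdom hg hlim_integrand
  have h := hint.rpow_const (p := 1 / p) (Or.inr (by positivity))
  rwa [integral_zero, zero_rpow (by positivity)] at h

theorem ite_log_rpow_sub_one_div_pos (γ : ℝ) {x : ℝ} (hx : 1 < x) :
    0 < if γ = 0 then log x else (x ^ γ - 1) / γ := by
  split_ifs with hγ
  · exact log_pos hx
  rcases lt_or_gt_of_ne hγ with hγ | hγ
  · exact div_pos_of_neg_of_neg (sub_neg.2 (rpow_lt_one_of_one_lt_of_neg hx hγ)) hγ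
  · exact div_pos (sub_pos.2 (one_lt_rpow hx hγ)) hγ

theorem App_tendsto_zero_general (V a : ℝ → ℝ) (hV : Monotone V)
    (hVbdd : ∃ M : ℝ, ∀ t ∈ Set.Ioc (0:ℝ) 1, |V t| ≤ M)
    (γ : ℝ) (hapos : ∀ᶠ t in atTop, 0 < a t)
    (haRV : ∀ x : ℝ, 0 < x → Tendsto (fun t => a (t * x) / a t) atTop (nhds (x ^ γ)))
    (hfo : ∀ x : ℝ, 0 < x →
      Tendsto (fun t => (V (t * x) - V t) / a t) atTop
        (nhds (if γ = 0 then Real.log x else (x ^ γ - 1) / γ)))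
    (p : ℝ) (hp1 : 1 ≤ p) (hpγ : p * max γ 0 < 1) :
    Tendsto
      (fun m =>
        (∫ z in Set.Ioi (0:ℝ),
            |(V (m * z) - V m) / a m -
              (if γ = 0 then Real.log z else (z ^ γ - 1) / γ)| ^ p *
              Real.exp (-1 / z) / z ^ 2) ^ (1/p))
      atTop (nhds 0) := by
  obtain ⟨M, hM⟩ := hVbdd
  have hL : ∀ t > 0, -M ≤ V t := fun t ht => by
    rcases le_or_gt t 1 with h | h
    · exact neg_le_of_abs_le (hM t ⟨ht, h⟩)
    · exact (neg_le_of_abs_le (hM 1 ⟨one_pos, le_rfl⟩)).trans (hV h.le)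
  have hp : 0 < p := by linarith
  obtain ⟨θ, hθ, hγθ, hpθ⟩ : ∃ θ, 0 < θ ∧ γ < θ ∧ p * θ < 1 := by
    have hmax : max γ 0 < 1 / p := by rw [lt_div_iff₀ hp]; linarith
    refine ⟨(max γ 0 + 1 / p) / 2, by positivity, by linarith [le_max_left γ 0], ?_⟩
    rw [lt_div_iff₀ hp] at hmax
    nlinarith [mul_one_div_cancel hp.ne']
  have h2θ : |(2 : ℝ) ^ γ| < 2 ^ θ := by
    rw [abs_of_pos (by positivity)]; exact rpow_lt_rpow_of_exponent_lt one_lt_two hγθ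
  have h2β : |(2⁻¹ : ℝ) ^ γ| < 2 ^ (|γ| + 1) := by
    rw [abs_of_pos (by positivity), inv_rpow zero_le_two, ← rpow_neg zero_le_two]
    exact rpow_lt_rpow_of_exponent_lt one_lt_two (by linarith [neg_le_abs γ])
  obtain ⟨D, hD, hbound⟩ := exists_eventually_abs_div_le_rpow_add_rpow hV hL hθ (by positivity)
    hapos (hfo 2 two_pos) (ite_log_rpow_sub_one_div_pos γ one_lt_two) (hfo 2⁻¹ (by norm_num))
    (haRV 2 two_pos) h2θ (haRV 2⁻¹ (by norm_num)) h2β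
  have hVm : Measurable V := hV.measurable
  exact tendsto_integral_abs_sub_rpow_of_le hp1 (by positivity) hpθ hD (fun m => by fun_prop) hfo
    hbound

/-- if `V` is nondecreasing and bounded on `(0,1]` (finite left endpoint),
satisfies the first order condition `(V(tx) - V(t))/a(t) → (x^γ - 1)/γ` for all `x > 0`
(interpreted as `log x` for `γ = 0`) with `γ < 1` and `a > 0` regularly varying of index
`γ`, then for `p ∈ [1, 1/max(γ,0))`,
`A''_p(m) = (∫₀^∞ |(V(mz) - V(m))/a(m) - (z^γ - 1)/γ|^p e^{-1/z} z⁻² dz)^{1/p} → 0` as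
`m → ∞`. -/
theorem App_tendsto_zero (V a : ℝ → ℝ) (hV : Monotone V)
    (hVbdd : ∃ M : ℝ, ∀ t ∈ Set.Ioc (0:ℝ) 1, |V t| ≤ M)
    (γ : ℝ) (hγ : γ < 1) (hapos : ∀ᶠ t in atTop, 0 < a t)
    (haRV : ∀ x : ℝ, 0 < x → Tendsto (fun t => a (t * x) / a t) atTop (nhds (x ^ γ)))
    (hfo : ∀ x : ℝ, 0 < x →
      Tendsto (fun t => (V (t * x) - V t) / a t) atTop
        (nhds (if γ = 0 then Real.log x else (x ^ γ - 1) / γ)))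
    (p : ℝ) (hp1 : 1 ≤ p) (hpγ : p * max γ 0 < 1) :
    Tendsto
      (fun m =>
        (∫ z in Set.Ioi (0:ℝ),
            |(V (m * z) - V m) / a m -
              (if γ = 0 then Real.log z else (z ^ γ - 1) / γ)| ^ p *
              Real.exp (-1 / z) / z ^ 2) ^ (1/p))
      atTop (nhds 0) :=
  App_tendsto_zero_general V a hV hVbdd γ hapos haRV hfo p hp1 hpγ
end
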